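/- Suppose $u$ is $C^2$ with $u_{x_n}>0$ and $\Delta u = f(u)$ where the hodograph function $v$ is defined by $u(y',v(y',y_n))=h(y_n)$ with $h''=f(h)$, $h'>0$, and $v$ is $C^2$ with $v_n>0$. Then $v$ satisfies the divergence-form equation $\partial_n\Big[(1+\sum_{i<n}v_i^2)\frac{(h')^2}{2v_n^2}\Big] - \sum_{i<n}\partial_i\Big[\frac{(h')^2 v_i}{v_n}\Big] = h'(y_n) f(h(y_n))$, where $h'=h'(y_n)$. -/

import Mathlib

/-!
The first-order hodograph identities `uₙ vₙ = h'` and `uᵢ = -uₙ vᵢ` rewrite both fluxes in terms of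
`∇u` at the hodograph point: `(1 + Σ vᵢ²)(h')²/(2vₙ²) = |∇u|²/2` and `(h')² vᵢ/vₙ = -h' uᵢ`.
Differentiating through `y ↦ (y', v y)` with the chain rule, `∂ₙ` of the first is `vₙ Σₖ uₖ uₙₖ`
and `∂ᵢ` of the second is `-h' (uᵢᵢ + vᵢ uₙᵢ)`; by the first-order identities once more the mixed
terms `h' vᵢ uₙᵢ` cancel, leaving `h' Δu = h' f(u) = h' f(h)`.
-/

open Set Finset

/-- Partial derivative of `f` in the `i`-th coordinate direction. -/
noncomputable def pd {m : ℕ} (f : EuclideanSpace ℝ (Fin m) → ℝ) (i : Fin m)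
    (x : EuclideanSpace ℝ (Fin m)) : ℝ :=
  fderiv ℝ f x (EuclideanSpace.single i 1)

/-- Second partial derivative `∂_i ∂_j f`. -/
noncomputable def pd2 {m : ℕ} (f : EuclideanSpace ℝ (Fin m) → ℝ) (i j : Fin m)
    (x : EuclideanSpace ℝ (Fin m)) : ℝ :=
  pd (fun z => pd f j z) i x

/-- The hodograph point `(y', v(y))`: replace the last coordinate of `y` by `v y`. -/
noncomputable def hodPt {n : ℕ} (v : EuclideanSpace ℝ (Fin (n+1)) → ℝ)
    (y : EuclideanSpace ℝ (Fin (n+1))) : EuclideanSpace ℝ (Fin (n+1)) :=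
  WithLp.toLp 2 (Function.update y (Fin.last n) (v y))

open Filter Topology

section Calculus

variable {m : ℕ}

theorem Filter.EventuallyEq.pd_eq {f g : EuclideanSpace ℝ (Fin m) → ℝ}
    {x : EuclideanSpace ℝ (Fin m)} (hfg : f =ᶠ[𝓝 x] g) (i : Fin m) : pd f i x = pd g i x := by
  simp only [pd, hfg.fderiv_eq]

theorem ContDiffAt.differentiableAt_pd {u : EuclideanSpace ℝ (Fin m) → ℝ}
    {x : EuclideanSpace ℝ (Fin m)} (hu : ContDiffAt ℝ 2 u x) (k : Fin m) :
    DifferentiableAt ℝ (fun z => pd u k z) x :=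
  ((hu.fderiv_right (m := 1) (by norm_num)).differentiableAt (by norm_num)).clm_apply
    (differentiableAt_const _)

theorem pd_neg (f : EuclideanSpace ℝ (Fin m) → ℝ) (i : Fin m) (x : EuclideanSpace ℝ (Fin m)) :
    pd (fun z => -f z) i x = -pd f i x := by
  simp [pd, fderiv_fun_neg]

theorem pd_mul {f g : EuclideanSpace ℝ (Fin m) → ℝ} {x : EuclideanSpace ℝ (Fin m)}
    (hf : DifferentiableAt ℝ f x) (hg : DifferentiableAt ℝ g x) (i : Fin m) :
    pd (fun z => f z * g z) i x = f x * pd g i x + g x * pd f i x := by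
  simp [pd, fderiv_fun_mul hf hg]

theorem pd_half_sum_sq {ι : Type*} [Fintype ι] {f : ι → EuclideanSpace ℝ (Fin m) → ℝ}
    {x : EuclideanSpace ℝ (Fin m)} (hf : ∀ k, DifferentiableAt ℝ (f k) x) (i : Fin m) :
    pd (fun z => 1 / 2 * ∑ k, f k z ^ 2) i x = ∑ k, f k x * pd (f k) i x := by
  have hd := (HasFDerivAt.fun_sum (u := Finset.univ) fun k _ =>
    (hf k).hasFDerivAt.pow 2).const_mul (1 / 2 : ℝ)
  rw [pd, hd.fderiv]
  simp only [FunLike.coe_smul, FunLike.coe_sum, Pi.smul_apply,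
    Finset.sum_apply, smul_eq_mul, Finset.mul_sum, pd]
  refine Finset.sum_congr rfl fun k _ => ?_
  simp only [nsmul_eq_mul]
  ring

theorem pd_comp_apply_self {g : ℝ → ℝ} {a : ℝ} {y : EuclideanSpace ℝ (Fin m)} {k : Fin m}
    (hg : HasDerivAt g a (y k)) : pd (fun z => g (z k)) k y = a := by
  have hd : HasFDerivAt (fun z : EuclideanSpace ℝ (Fin m) => g (z k)) _ y :=
    hg.comp_hasFDerivAt y ((EuclideanSpace.proj (𝕜 := ℝ) k).hasFDerivAt (x := y))
  rw [pd, hd.fderiv]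
  simp

theorem pd_comp_apply_of_ne {g : ℝ → ℝ} {a : ℝ} {y : EuclideanSpace ℝ (Fin m)} {j k : Fin m}
    (hg : HasDerivAt g a (y k)) (hjk : j ≠ k) : pd (fun z => g (z k)) j y = 0 := by
  have hd : HasFDerivAt (fun z : EuclideanSpace ℝ (Fin m) => g (z k)) _ y :=
    hg.comp_hasFDerivAt y ((EuclideanSpace.proj (𝕜 := ℝ) k).hasFDerivAt (x := y))
  rw [pd, hd.fderiv]
  simp [hjk.symm]

end Calculus

section Hodograph

variable {n : ℕ}

theorem hodPt_eq_add_smul (v : EuclideanSpace ℝ (Fin (n+1)) → ℝ)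
    (z : EuclideanSpace ℝ (Fin (n+1))) :
    hodPt v z = z + (v z - z (Fin.last n)) • EuclideanSpace.single (Fin.last n) (1 : ℝ) := by
  ext j
  by_cases hj : j = Fin.last n
  · subst hj; simp [hodPt]
  · simp [hodPt, hj]

theorem HasFDerivAt.hodPt {v : EuclideanSpace ℝ (Fin (n+1)) → ℝ}
    {v' : EuclideanSpace ℝ (Fin (n+1)) →L[ℝ] ℝ} {y : EuclideanSpace ℝ (Fin (n+1))}
    (hv : HasFDerivAt v v' y) :
    HasFDerivAt (hodPt v)
      (ContinuousLinearMap.id ℝ _ + (v' - EuclideanSpace.proj (Fin.last n)).smulRight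
        (EuclideanSpace.single (Fin.last n) (1 : ℝ))) y := by
  simp only [funext (hodPt_eq_add_smul v)]
  exact (hasFDerivAt_id y).add
    ((hv.sub (EuclideanSpace.proj (Fin.last n)).hasFDerivAt).smul_const _)

theorem fderiv_comp_hodPt_apply {F v : EuclideanSpace ℝ (Fin (n+1)) → ℝ}
    {y : EuclideanSpace ℝ (Fin (n+1))} (hF : DifferentiableAt ℝ F (hodPt v y))
    (hv : DifferentiableAt ℝ v y) (w : EuclideanSpace ℝ (Fin (n+1))) :
    fderiv ℝ (fun z => F (hodPt v z)) y w
      = fderiv ℝ F (hodPt v y) w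
        + (fderiv ℝ v y w - w (Fin.last n)) * pd F (Fin.last n) (hodPt v y) := by
  have hd : HasFDerivAt (fun z => F (hodPt v z)) _ y :=
    hF.hasFDerivAt.comp y hv.hasFDerivAt.hodPt
  rw [hd.fderiv]
  simp [pd]

theorem pd_comp_hodPt_castSucc {F v : EuclideanSpace ℝ (Fin (n+1)) → ℝ}
    {y : EuclideanSpace ℝ (Fin (n+1))} (hF : DifferentiableAt ℝ F (hodPt v y))
    (hv : DifferentiableAt ℝ v y) (i : Fin n) :
    pd (fun z => F (hodPt v z)) i.castSucc y
      = pd F i.castSucc (hodPt v y) + pd v i.castSucc y * pd F (Fin.last n) (hodPt v y) := by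
  rw [pd, fderiv_comp_hodPt_apply hF hv]
  simp [pd, (Fin.castSucc_lt_last i).ne']

theorem pd_comp_hodPt_last {F v : EuclideanSpace ℝ (Fin (n+1)) → ℝ}
    {y : EuclideanSpace ℝ (Fin (n+1))} (hF : DifferentiableAt ℝ F (hodPt v y))
    (hv : DifferentiableAt ℝ v y) :
    pd (fun z => F (hodPt v z)) (Fin.last n) y
      = pd v (Fin.last n) y * pd F (Fin.last n) (hodPt v y) := by
  rw [pd, fderiv_comp_hodPt_apply hF hv]
  simp only [pd, PiLp.single_apply, if_true]
  ring

end Hodograph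

section Algebra

variable {n : ℕ}

/-- The first-order hodograph identities `uₙ vₙ = h'` and `uᵢ = -uₙ vᵢ`, with `p = ∇u` at the
hodograph point, `q = ∇v` and `a = h'`. -/
def HodographRelation (p q : Fin (n+1) → ℝ) (a : ℝ) : Prop :=
  p (Fin.last n) * q (Fin.last n) = a ∧ ∀ i : Fin n, p i.castSucc = -(p (Fin.last n) * q i.castSucc)

namespace HodographRelation

variable {p q : Fin (n+1) → ℝ} {a : ℝ}

theorem half_sum_sq (hpq : HodographRelation p q a) (hq : q (Fin.last n) ≠ 0) :
    (1 + ∑ i : Fin n, q i.castSucc ^ 2) * a ^ 2 / (2 * q (Fin.last n) ^ 2)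
      = 1 / 2 * ∑ k : Fin (n+1), p k ^ 2 := by
  obtain ⟨hlast, hcs⟩ := hpq
  simp only [Fin.sum_univ_castSucc, hcs, ← hlast, neg_sq, mul_pow, ← Finset.mul_sum]
  field_simp
  ring

theorem sq_mul_div (hpq : HodographRelation p q a) (hq : q (Fin.last n) ≠ 0) (i : Fin n) :
    a ^ 2 * q i.castSucc / q (Fin.last n) = -(a * p i.castSucc) := by
  obtain ⟨hlast, hcs⟩ := hpq
  rw [hcs, ← hlast]
  field_simp

theorem divergence (hpq : HodographRelation p q a) (H : Fin (n+1) → Fin (n+1) → ℝ) :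
    q (Fin.last n) * ∑ k, p k * H (Fin.last n) k
        - ∑ i : Fin n, -(a * (H i.castSucc i.castSucc + q i.castSucc * H (Fin.last n) i.castSucc))
      = a * ∑ k, H k k := by
  obtain ⟨hlast, hcs⟩ := hpq
  have hterm : ∀ i : Fin n, q (Fin.last n) * (p i.castSucc * H (Fin.last n) i.castSucc)
      + a * (H i.castSucc i.castSucc + q i.castSucc * H (Fin.last n) i.castSucc)
      = a * H i.castSucc i.castSucc := by
    intro i
    rw [hcs, ← hlast]
    ring
  have hsum := Finset.sum_congr rfl fun i (_ : i ∈ Finset.univ) => hterm i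
  simp only [Finset.sum_add_distrib, ← Finset.mul_sum] at hsum
  simp only [Fin.sum_univ_castSucc, Finset.sum_neg_distrib, Finset.sum_add_distrib,
    ← Finset.mul_sum]
  linear_combination hsum + H (Fin.last n) (Fin.last n) * hlast

end HodographRelation

end Algebra

section HodographDerivatives

variable {n : ℕ} {u v : EuclideanSpace ℝ (Fin (n+1)) → ℝ} {y : EuclideanSpace ℝ (Fin (n+1))}

theorem hodographRelation_of_comp_hodPt_eventuallyEq {h : ℝ → ℝ} {a : ℝ}
    (hu : DifferentiableAt ℝ u (hodPt v y)) (hv : DifferentiableAt ℝ v y)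
    (hh : HasDerivAt h a (y (Fin.last n)))
    (hrel : (fun z => u (hodPt v z)) =ᶠ[𝓝 y] fun z => h (z (Fin.last n))) :
    HodographRelation (fun k => pd u k (hodPt v y)) (fun k => pd v k y) a := by
  refine ⟨?_, fun i => ?_⟩
  · have hlast := hrel.pd_eq (Fin.last n)
    rw [pd_comp_hodPt_last hu hv, pd_comp_apply_self hh] at hlast
    linear_combination hlast
  · have hcs := hrel.pd_eq i.castSucc
    rw [pd_comp_hodPt_castSucc hu hv, pd_comp_apply_of_ne hh (Fin.castSucc_lt_last i).ne] at hcs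
    linear_combination hcs

theorem differentiableAt_pd_comp_hodPt (hu : ContDiffAt ℝ 2 u (hodPt v y))
    (hv : DifferentiableAt ℝ v y) (k : Fin (n+1)) :
    DifferentiableAt ℝ (fun z => pd u k (hodPt v z)) y :=
  (hu.differentiableAt_pd k).comp y hv.hasFDerivAt.hodPt.differentiableAt

theorem pd_half_sum_sq_pd_comp_hodPt_last (hu : ContDiffAt ℝ 2 u (hodPt v y))
    (hv : DifferentiableAt ℝ v y) :
    pd (fun z => 1 / 2 * ∑ k, pd u k (hodPt v z) ^ 2) (Fin.last n) y
      = pd v (Fin.last n) y * ∑ k, pd u k (hodPt v y) * pd2 u (Fin.last n) k (hodPt v y) := by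
  rw [pd_half_sum_sq (differentiableAt_pd_comp_hodPt hu hv), Finset.mul_sum]
  refine Finset.sum_congr rfl fun k _ => ?_
  rw [pd_comp_hodPt_last (hu.differentiableAt_pd k) hv, pd2]
  ring

theorem pd_mul_pd_comp_hodPt_castSucc {g : ℝ → ℝ} {a : ℝ} (hu : ContDiffAt ℝ 2 u (hodPt v y))
    (hv : DifferentiableAt ℝ v y) (hg : HasDerivAt g a (y (Fin.last n))) (i : Fin n) :
    pd (fun z => g (z (Fin.last n)) * pd u i.castSucc (hodPt v z)) i.castSucc y
      = g (y (Fin.last n)) * (pd2 u i.castSucc i.castSucc (hodPt v y)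
          + pd v i.castSucc y * pd2 u (Fin.last n) i.castSucc (hodPt v y)) := by
  have hgd : DifferentiableAt ℝ (fun z : EuclideanSpace ℝ (Fin (n+1)) => g (z (Fin.last n))) y :=
    hg.differentiableAt.comp y (EuclideanSpace.proj (𝕜 := ℝ) (Fin.last n)).differentiableAt
  rw [pd_mul hgd (differentiableAt_pd_comp_hodPt hu hv i.castSucc),
    pd_comp_hodPt_castSucc (hu.differentiableAt_pd _) hv,
    pd_comp_apply_of_ne hg (Fin.castSucc_lt_last i).ne, pd2, pd2]
  ring

end HodographDerivatives

theorem stmt13_general (n : ℕ) (u v : EuclideanSpace ℝ (Fin (n+1)) → ℝ)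
    (f h h' : ℝ → ℝ)
    (B U : Set (EuclideanSpace ℝ (Fin (n+1))))
    (hB : IsOpen B) (hU : IsOpen U)
    (hu : ContDiffOn ℝ 2 u B)
    (hlap : ∀ x ∈ B, (∑ i : Fin (n+1), pd2 u i i x) = f (u x))
    (hh1 : ∀ t, HasDerivAt h (h' t) t)
    (hh2 : ∀ t, HasDerivAt h' (f (h t)) t)
    (hv : ContDiffOn ℝ 2 v U)
    (hvn : ∀ y ∈ U, 0 < pd v (Fin.last n) y)
    (hmap : ∀ y ∈ U, hodPt v y ∈ B)
    (hrel : ∀ y ∈ U, u (hodPt v y) = h (y (Fin.last n))) :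
    ∀ y ∈ U,
      pd (fun z =>
          (1 + ∑ i : Fin n, (pd v i.castSucc z)^2) * (h' (z (Fin.last n)))^2
            / (2 * (pd v (Fin.last n) z)^2)) (Fin.last n) y
        - ∑ i : Fin n,
            pd (fun z =>
              (h' (z (Fin.last n)))^2 * pd v i.castSucc z / pd v (Fin.last n) z)
              i.castSucc y
      = h' (y (Fin.last n)) * f (h (y (Fin.last n))) := by
  have hu2 : ∀ z ∈ U, ContDiffAt ℝ 2 u (hodPt v z) := fun z hz =>
    hu.contDiffAt (hB.mem_nhds (hmap z hz))
  have hv1 : ∀ z ∈ U, DifferentiableAt ℝ v z := fun z hz =>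
    (hv.contDiffAt (hU.mem_nhds hz)).differentiableAt (by norm_num)
  have hfirst : ∀ z ∈ U, HodographRelation (fun k => pd u k (hodPt v z)) (fun k => pd v k z)
      (h' (z (Fin.last n))) := fun z hz =>
    hodographRelation_of_comp_hodPt_eventuallyEq ((hu2 z hz).differentiableAt (by norm_num))
      (hv1 z hz) (hh1 _) (eventually_of_mem (hU.mem_nhds hz) hrel)
  intro y hy
  have hA : (fun z => (1 + ∑ i : Fin n, (pd v i.castSucc z)^2) * (h' (z (Fin.last n)))^2
      / (2 * (pd v (Fin.last n) z)^2)) =ᶠ[𝓝 y] fun z => 1 / 2 * ∑ k, pd u k (hodPt v z) ^ 2 :=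
    eventually_of_mem (hU.mem_nhds hy) fun z hz => (hfirst z hz).half_sum_sq (hvn z hz).ne'
  have hBi (i : Fin n) : (fun z => (h' (z (Fin.last n)))^2 * pd v i.castSucc z
      / pd v (Fin.last n) z)
      =ᶠ[𝓝 y] fun z => -(h' (z (Fin.last n)) * pd u i.castSucc (hodPt v z)) :=
    eventually_of_mem (hU.mem_nhds hy) fun z hz => (hfirst z hz).sq_mul_div (hvn z hz).ne' i
  simp only [hA.pd_eq, fun i => (hBi i).pd_eq, pd_neg,
    pd_half_sum_sq_pd_comp_hodPt_last (hu2 y hy) (hv1 y hy),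
    pd_mul_pd_comp_hodPt_castSucc (hu2 y hy) (hv1 y hy) (hh2 _)]
  rw [← hrel y hy, ← hlap _ (hmap y hy)]
  exact (hfirst y hy).divergence fun j k => pd2 u j k (hodPt v y)

/-- The hodograph function `v` of a solution of `Δu = f(u)` satisfies the divergence-form
equation `∂ₙ[(1+Σᵢ vᵢ²)(h')²/(2vₙ²)] - Σᵢ ∂ᵢ[(h')² vᵢ/vₙ] = h' f(h)`. -/
theorem stmt13 (n : ℕ) (u v : EuclideanSpace ℝ (Fin (n+1)) → ℝ)
    (f h h' : ℝ → ℝ)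
    (B U : Set (EuclideanSpace ℝ (Fin (n+1))))
    (hB : IsOpen B) (hU : IsOpen U)
    (hf : Continuous f)
    (hu : ContDiffOn ℝ 2 u B)
    (hlap : ∀ x ∈ B, (∑ i : Fin (n+1), pd2 u i i x) = f (u x))
    (hun : ∀ x ∈ B, 0 < pd u (Fin.last n) x)
    (hh1 : ∀ t, HasDerivAt h (h' t) t)
    (hh2 : ∀ t, HasDerivAt h' (f (h t)) t)
    (hh'pos : ∀ t, 0 < h' t)
    (hv : ContDiffOn ℝ 2 v U)
    (hvn : ∀ y ∈ U, 0 < pd v (Fin.last n) y)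
    (hmap : ∀ y ∈ U, hodPt v y ∈ B)
    (hrel : ∀ y ∈ U, u (hodPt v y) = h (y (Fin.last n))) :
    ∀ y ∈ U,
      pd (fun z =>
          (1 + ∑ i : Fin n, (pd v i.castSucc z)^2) * (h' (z (Fin.last n)))^2
            / (2 * (pd v (Fin.last n) z)^2)) (Fin.last n) y
        - ∑ i : Fin n,
            pd (fun z =>
              (h' (z (Fin.last n)))^2 * pd v i.castSucc z / pd v (Fin.last n) z)
              i.castSucc y
      = h' (y (Fin.last n)) * f (h (y (Fin.last n))) :=
  stmt13_general n u v f h h' B U hB hU hu hlap hh1 hh2 hv hvn hmap hrel
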